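/- arXiv:2303.13140 — 7 statements merged into one kernel-verified Lean document; each statement's English description precedes it below -/
import Mathlib

section
/- Let d ≥ 1 and let Λ₁, Λ₂ be invertible lower-triangular real d×d matrices whose (1,1) entries satisfy 0 < (Λ₁)₁₁ < (Λ₂)₁₁. If the matrix T = Λ₁Λ₂⁻¹ is a contraction with respect to the Euclidean operator norm, then |(Λ₁)ᵢᵢ| ≤ |(Λ₂)ᵢᵢ| for every index i; consequently, for every index i ≥ 2 the instantaneous Poisson's ratio ν₁ᵢ = −[(|(Λ₂)ᵢᵢ| − |(Λ₁)ᵢᵢ|)/|(Λ₁)ᵢᵢ|] / [((Λ₂)₁₁ − (Λ₁)₁₁)/(Λ₁)₁₁] is nonpositive. -/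
/-!
Write `T = Λ₁ Λ₂⁻¹`, so that `Λ₁ = T Λ₂`. Inverses and products of lower-triangular matrices
are lower triangular, and the diagonal of a product of triangular matrices is the product of
the diagonals, so `(Λ₁)ᵢᵢ = Tᵢᵢ (Λ₂)ᵢᵢ`. Every entry of a matrix is bounded by its operator
norm, hence `|Tᵢᵢ| ≤ ‖T‖ ≤ 1`. With `|(Λ₁)ᵢᵢ| ≤ |(Λ₂)ᵢᵢ|`, the Poisson's ratio is a
nonpositive numerator over a positive denominator.
-/

namespace Matrix

theorem BlockTriangular.mul_apply_self_of_injective {m α R : Type*} [Fintype m] [LinearOrder α]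
    [NonUnitalNonAssocSemiring R] {M N : Matrix m m R} {b : m → α} (hb : Function.Injective b)
    (hM : M.BlockTriangular b) (hN : N.BlockTriangular b) (i : m) :
    (M * N) i i = M i i * N i i := by
  refine Finset.sum_eq_single i (fun k _ hki => ?_) (by simp)
  rcases lt_or_gt_of_ne (hb.ne hki) with hlt | hgt
  · simp [hM hlt]
  · simp [hN hgt]

theorem norm_apply_le_norm_toEuclideanCLM {n 𝕜 : Type*} [Fintype n] [DecidableEq n] [RCLike 𝕜]
    (A : Matrix n n 𝕜) (i j : n) : ‖A i j‖ ≤ ‖toEuclideanCLM (𝕜 := 𝕜) A‖ := by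
  let e : EuclideanSpace 𝕜 n := EuclideanSpace.single j 1
  have happly : toEuclideanCLM (𝕜 := 𝕜) A e i = A i j := by
    simp [e, ofLp_toEuclideanCLM, mulVec_single]
  calc ‖A i j‖ = ‖toEuclideanCLM (𝕜 := 𝕜) A e i‖ := by rw [happly]
    _ ≤ ‖toEuclideanCLM (𝕜 := 𝕜) A e‖ := PiLp.norm_apply_le _ i
    _ ≤ ‖toEuclideanCLM (𝕜 := 𝕜) A‖ * ‖e‖ := (toEuclideanCLM (𝕜 := 𝕜) A).le_opNorm e
    _ = ‖toEuclideanCLM (𝕜 := 𝕜) A‖ := by simp [e]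

theorem IsLowerTriangular.norm_apply_self_le_of_norm_toEuclideanCLM_mul_inv_le_one
    {n 𝕜 : Type*} [Fintype n] [DecidableEq n] [LinearOrder n] [RCLike 𝕜]
    {Λ₁ Λ₂ : Matrix n n 𝕜} (h₁ : Λ₁.IsLowerTriangular) (h₂ : Λ₂.IsLowerTriangular)
    (hdet₂ : IsUnit Λ₂.det) (hcontr : ‖toEuclideanCLM (𝕜 := 𝕜) (Λ₁ * Λ₂⁻¹)‖ ≤ 1) (i : n) :
    ‖Λ₁ i i‖ ≤ ‖Λ₂ i i‖ := by
  have : Invertible Λ₂ := Λ₂.invertibleOfIsUnitDet hdet₂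
  have hT : (Λ₁ * Λ₂⁻¹).IsLowerTriangular := h₁.mul (blockTriangular_inv_of_blockTriangular h₂)
  have hdiag : Λ₁ i i = (Λ₁ * Λ₂⁻¹) i i * Λ₂ i i := by
    conv_lhs => rw [← nonsing_inv_mul_cancel_right Λ₂ Λ₁ hdet₂]
    exact hT.mul_apply_self_of_injective OrderDual.toDual.injective h₂ i
  calc ‖Λ₁ i i‖ = ‖(Λ₁ * Λ₂⁻¹) i i‖ * ‖Λ₂ i i‖ := by rw [hdiag, norm_mul]
    _ ≤ 1 * ‖Λ₂ i i‖ := by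
      gcongr
      exact (norm_apply_le_norm_toEuclideanCLM _ i i).trans hcontr
    _ = ‖Λ₂ i i‖ := one_mul _

end Matrix

theorem stmt_0_general (d : ℕ) (hd : 1 ≤ d) (Λ₁ Λ₂ : Matrix (Fin d) (Fin d) ℝ)
    (hlow₁ : ∀ i j : Fin d, i < j → Λ₁ i j = 0)
    (hlow₂ : ∀ i j : Fin d, i < j → Λ₂ i j = 0)
    (hinv₂ : IsUnit Λ₂.det)
    (hpos : 0 < Λ₁ ⟨0, hd⟩ ⟨0, hd⟩)
    (hlt : Λ₁ ⟨0, hd⟩ ⟨0, hd⟩ < Λ₂ ⟨0, hd⟩ ⟨0, hd⟩)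
    (hcontr : ‖Matrix.toEuclideanCLM (𝕜 := ℝ) (Λ₁ * Λ₂⁻¹)‖ ≤ 1) :
    (∀ i : Fin d, |Λ₁ i i| ≤ |Λ₂ i i|) ∧
    ∀ i : Fin d, i ≠ ⟨0, hd⟩ →
      -((|Λ₂ i i| - |Λ₁ i i|) / |Λ₁ i i|) /
        ((Λ₂ ⟨0, hd⟩ ⟨0, hd⟩ - Λ₁ ⟨0, hd⟩ ⟨0, hd⟩) / Λ₁ ⟨0, hd⟩ ⟨0, hd⟩) ≤ 0 := by
  have hdiag (i : Fin d) : |Λ₁ i i| ≤ |Λ₂ i i| :=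
    Matrix.IsLowerTriangular.norm_apply_self_le_of_norm_toEuclideanCLM_mul_inv_le_one
      (fun i j h => hlow₁ i j h) (fun i j h => hlow₂ i j h) hinv₂ hcontr i
  refine ⟨hdiag, fun i _ => div_nonpos_of_nonpos_of_nonneg ?_ ?_⟩
  · exact neg_nonpos_of_nonneg (div_nonneg (sub_nonneg.mpr (hdiag i)) (abs_nonneg _))
  · exact div_nonneg (sub_nonneg.mpr hlt.le) hpos.le

/-- Forward direction of Proposition 3.1: if `Λ₁, Λ₂` are invertible
lower-triangular real `d × d` matrices with `0 < (Λ₁)₁₁ < (Λ₂)₁₁` and the linear operator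
`T = Λ₁ Λ₂⁻¹` is a contraction in the Euclidean operator norm, then `|(Λ₁)ᵢᵢ| ≤ |(Λ₂)ᵢᵢ|`
for every `i`, and hence the instantaneous Poisson's ratio `ν₁ᵢ` is nonpositive for `i ≥ 2`. -/
theorem stmt_0 (d : ℕ) (hd : 1 ≤ d) (Λ₁ Λ₂ : Matrix (Fin d) (Fin d) ℝ)
    (hlow₁ : ∀ i j : Fin d, i < j → Λ₁ i j = 0)
    (hlow₂ : ∀ i j : Fin d, i < j → Λ₂ i j = 0)
    (hinv₁ : IsUnit Λ₁.det) (hinv₂ : IsUnit Λ₂.det)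
    (hpos : 0 < Λ₁ ⟨0, hd⟩ ⟨0, hd⟩)
    (hlt : Λ₁ ⟨0, hd⟩ ⟨0, hd⟩ < Λ₂ ⟨0, hd⟩ ⟨0, hd⟩)
    (hcontr : ‖Matrix.toEuclideanCLM (𝕜 := ℝ) (Λ₁ * Λ₂⁻¹)‖ ≤ 1) :
    (∀ i : Fin d, |Λ₁ i i| ≤ |Λ₂ i i|) ∧
    ∀ i : Fin d, i ≠ ⟨0, hd⟩ →
      -((|Λ₂ i i| - |Λ₁ i i|) / |Λ₁ i i|) /
        ((Λ₂ ⟨0, hd⟩ ⟨0, hd⟩ - Λ₁ ⟨0, hd⟩ ⟨0, hd⟩) / Λ₁ ⟨0, hd⟩ ⟨0, hd⟩) ≤ 0 :=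
  stmt_0_general d hd Λ₁ Λ₂ hlow₁ hlow₂ hinv₂ hpos hlt hcontr
end

section
/- Let d ≥ 1 and let Λ₁, Λ₂ be invertible diagonal real d×d matrices whose (1,1) entries satisfy 0 < (Λ₁)₁₁ < (Λ₂)₁₁. Suppose that for every index i ≥ 2 the instantaneous Poisson's ratio ν₁ᵢ = −[(|(Λ₂)ᵢᵢ| − |(Λ₁)ᵢᵢ|)/|(Λ₁)ᵢᵢ|] / [((Λ₂)₁₁ − (Λ₁)₁₁)/(Λ₁)₁₁] is nonpositive. Then the matrix T = Λ₁Λ₂⁻¹ is a contraction with respect to the Euclidean operator norm. -/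
/-- Converse direction of Proposition 3.1: if `Λ₁, Λ₂` are invertible
diagonal real `d × d` matrices with `0 < (Λ₁)₁₁ < (Λ₂)₁₁` and the instantaneous Poisson's
ratio `ν₁ᵢ` is nonpositive for every index `i ≥ 2`, then `T = Λ₁ Λ₂⁻¹` is a contraction
with respect to the Euclidean operator norm. -/
theorem stmt_2 (d : ℕ) (hd : 1 ≤ d) (Λ₁ Λ₂ : Matrix (Fin d) (Fin d) ℝ)
    (hdiag₁ : ∀ i j : Fin d, i ≠ j → Λ₁ i j = 0)
    (hdiag₂ : ∀ i j : Fin d, i ≠ j → Λ₂ i j = 0)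
    (hinv₁ : IsUnit Λ₁.det) (hinv₂ : IsUnit Λ₂.det)
    (hpos : 0 < Λ₁ ⟨0, hd⟩ ⟨0, hd⟩)
    (hlt : Λ₁ ⟨0, hd⟩ ⟨0, hd⟩ < Λ₂ ⟨0, hd⟩ ⟨0, hd⟩)
    (hpoisson : ∀ i : Fin d, i ≠ ⟨0, hd⟩ →
      -((|Λ₂ i i| - |Λ₁ i i|) / |Λ₁ i i|) /
        ((Λ₂ ⟨0, hd⟩ ⟨0, hd⟩ - Λ₁ ⟨0, hd⟩ ⟨0, hd⟩) / Λ₁ ⟨0, hd⟩ ⟨0, hd⟩) ≤ 0) :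
    ‖Matrix.toEuclideanCLM (𝕜 := ℝ) (Λ₁ * Λ₂⁻¹)‖ ≤ 1 := by
  -- express matrices as diagonal
  have e₁ : Λ₁ = Matrix.diagonal (fun i => Λ₁ i i) := by
    ext i j
    by_cases h : i = j
    · subst h; simp
    · simp [Matrix.diagonal_apply_ne _ h, hdiag₁ i j h]
  have e₂ : Λ₂ = Matrix.diagonal (fun i => Λ₂ i i) := by
    ext i j
    by_cases h : i = j
    · subst h; simp
    · simp [Matrix.diagonal_apply_ne _ h, hdiag₂ i j h]
  -- nonzero diagonal entries
  have h₁ne : ∀ i, Λ₁ i i ≠ 0 := by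
    intro i
    rw [e₁, Matrix.det_diagonal] at hinv₁
    have := hinv₁.ne_zero
    intro h
    exact this (Finset.prod_eq_zero (Finset.mem_univ i) h)
  have h₂ne : ∀ i, Λ₂ i i ≠ 0 := by
    intro i
    rw [e₂, Matrix.det_diagonal] at hinv₂
    have := hinv₂.ne_zero
    intro h
    exact this (Finset.prod_eq_zero (Finset.mem_univ i) h)
  -- |Λ₁ i i| ≤ |Λ₂ i i| for all i
  have key : ∀ i, |Λ₁ i i| ≤ |Λ₂ i i| := by
    intro i
    by_cases hi : i = ⟨0, hd⟩
    · subst hi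
      rw [abs_of_pos hpos, abs_of_pos (hpos.trans hlt)]
      exact hlt.le
    · have h := hpoisson i hi
      have hden : 0 < (Λ₂ ⟨0, hd⟩ ⟨0, hd⟩ - Λ₁ ⟨0, hd⟩ ⟨0, hd⟩) / Λ₁ ⟨0, hd⟩ ⟨0, hd⟩ :=
        div_pos (by linarith) hpos
      have h2 : -((|Λ₂ i i| - |Λ₁ i i|) / |Λ₁ i i|) ≤ 0 := by
        by_contra hc
        push_neg at hc
        exact absurd h (not_le.2 (div_pos hc hden))
      have h3 : 0 ≤ (|Λ₂ i i| - |Λ₁ i i|) / |Λ₁ i i| := by linarith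
      have h4 : 0 < |Λ₁ i i| := abs_pos.2 (h₁ne i)
      have h5 := mul_nonneg h3 h4.le
      rw [div_mul_cancel₀ _ (ne_of_gt h4)] at h5
      linarith
  -- the product is diagonal with entries Λ₁ i i / Λ₂ i i
  have hprod : Λ₁ * Λ₂⁻¹ = Matrix.diagonal (fun i => Λ₁ i i / Λ₂ i i) := by
    have hinv : Λ₂⁻¹ = Matrix.diagonal (fun i => (Λ₂ i i)⁻¹) := by
      apply Matrix.inv_eq_right_inv
      rw [e₂, Matrix.diagonal_mul_diagonal]
      ext i j
      by_cases h : i = j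
      · subst h; simp [mul_inv_cancel₀ (h₂ne i)]
      · simp [Matrix.diagonal_apply_ne _ h, Matrix.one_apply_ne h]
    rw [hinv, e₁, Matrix.diagonal_mul_diagonal]
    simp [div_eq_mul_inv]
  rw [hprod]
  apply ContinuousLinearMap.opNorm_le_bound _ zero_le_one
  intro x
  rw [one_mul]
  have hx : ∀ y : EuclideanSpace ℝ (Fin d), ‖y‖ = Real.sqrt (∑ i, ‖y i‖ ^ 2) := by
    intro y; exact EuclideanSpace.norm_eq y
  rw [hx, hx x]
  apply Real.sqrt_le_sqrt
  apply Finset.sum_le_sum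
  intro i _
  have happ : (Matrix.toEuclideanCLM (𝕜 := ℝ) (Matrix.diagonal (fun i => Λ₁ i i / Λ₂ i i)) x) i
      = (Λ₁ i i / Λ₂ i i) * x i := by
    have := Matrix.ofLp_toEuclideanCLM (𝕜 := ℝ)
      (Matrix.diagonal (fun i => Λ₁ i i / Λ₂ i i)) x
    have h2 := congrFun this i
    simpa [Matrix.mulVec_diagonal] using h2
  rw [happ, norm_mul]
  have hle : ‖(Λ₁ i i / Λ₂ i i : ℝ)‖ ≤ 1 := by
    rw [Real.norm_eq_abs, abs_div]
    exact div_le_one_of_le₀ (key i) (abs_nonneg _)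
  rw [mul_pow]
  have h1 : (0:ℝ) ≤ ‖(Λ₁ i i / Λ₂ i i : ℝ)‖ := norm_nonneg _
  have h2 : ‖(Λ₁ i i / Λ₂ i i : ℝ)‖ ^ 2 ≤ 1 := by nlinarith
  nlinarith [sq_nonneg ‖x i‖]
end

section
/- Let α > 0 and let Λ₁, Λ₂ be real 3×3 lower-triangular matrices with nonzero diagonal entries such that, for each k ∈ {1,2}, every strictly-below-diagonal entry of Λ_k satisfies |(Λ_k)_{jl}| ≤ α·|(Λ_k)ᵢᵢ| for all i ∈ {1,2,3}. Then the matrix T = Λ₁Λ₂⁻¹ satisfies |T₂₁| ≤ α·(|T₁₁| + |T₂₂|) and |T₃₂| ≤ α·(|T₂₂| + |T₃₃|). -/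
/-- Under the hypotheses of Proposition 3.2 on the strictly-below-diagonal
entries of the lower-triangular matrices `Λ₁, Λ₂`, the subdiagonal entries of `T = Λ₁ Λ₂⁻¹`
satisfy `|T₂₁| ≤ α (|T₁₁| + |T₂₂|)` and `|T₃₂| ≤ α (|T₂₂| + |T₃₃|)`. -/
theorem stmt_5 (α : ℝ) (hα : 0 < α) (Λ₁ Λ₂ : Matrix (Fin 3) (Fin 3) ℝ)
    (hlow₁ : ∀ i j : Fin 3, i < j → Λ₁ i j = 0)
    (hlow₂ : ∀ i j : Fin 3, i < j → Λ₂ i j = 0)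
    (hdiag₁ : ∀ i : Fin 3, Λ₁ i i ≠ 0)
    (hdiag₂ : ∀ i : Fin 3, Λ₂ i i ≠ 0)
    (hbd₁ : ∀ j l : Fin 3, l < j → ∀ i : Fin 3, |Λ₁ j l| ≤ α * |Λ₁ i i|)
    (hbd₂ : ∀ j l : Fin 3, l < j → ∀ i : Fin 3, |Λ₂ j l| ≤ α * |Λ₂ i i|) :
    |(Λ₁ * Λ₂⁻¹) 1 0| ≤ α * (|(Λ₁ * Λ₂⁻¹) 0 0| + |(Λ₁ * Λ₂⁻¹) 1 1|) ∧
    |(Λ₁ * Λ₂⁻¹) 2 1| ≤ α * (|(Λ₁ * Λ₂⁻¹) 1 1| + |(Λ₁ * Λ₂⁻¹) 2 2|) := by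
  set a := Λ₂ 0 0 with ha
  set b := Λ₂ 1 0 with hb
  set c := Λ₂ 1 1 with hc
  set d := Λ₂ 2 0 with hd
  set e := Λ₂ 2 1 with he
  set f := Λ₂ 2 2 with hf
  have ha0 : a ≠ 0 := hdiag₂ 0
  have hc0 : c ≠ 0 := hdiag₂ 1
  have hf0 : f ≠ 0 := hdiag₂ 2
  have h01 : Λ₂ 0 1 = 0 := hlow₂ 0 1 (by decide)
  have h02 : Λ₂ 0 2 = 0 := hlow₂ 0 2 (by decide)
  have h12 : Λ₂ 1 2 = 0 := hlow₂ 1 2 (by decide)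
  have hL12 : Λ₁ 1 2 = 0 := hlow₁ 1 2 (by decide)
  set M : Matrix (Fin 3) (Fin 3) ℝ :=
    !![1/a, 0, 0; -b/(a*c), 1/c, 0; (b*e - c*d)/(a*c*f), -e/(c*f), 1/f] with hM
  have hinv : Λ₂⁻¹ = M := by
    apply Matrix.inv_eq_right_inv
    ext i j
    fin_cases i <;> fin_cases j <;>
      simp [hM, Matrix.mul_apply, Fin.sum_univ_three, h01, h02, h12, Matrix.one_apply] <;>
      field_simp <;> ring
  rw [hinv]
  have hT00 : (Λ₁ * M) 0 0 = Λ₁ 0 0 / a := by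
    simp [hM, Matrix.mul_apply, Fin.sum_univ_three, hlow₁ 0 1 (by decide), hlow₁ 0 2 (by decide)]
    ring
  have hT11 : (Λ₁ * M) 1 1 = Λ₁ 1 1 / c := by
    simp [hM, Matrix.mul_apply, Fin.sum_univ_three, hL12]
    ring
  have hT22 : (Λ₁ * M) 2 2 = Λ₁ 2 2 / f := by
    simp [hM, Matrix.mul_apply, Fin.sum_univ_three]
    ring
  have hT10 : (Λ₁ * M) 1 0 = Λ₁ 1 0 / a - Λ₁ 1 1 * b / (a * c) := by
    simp [hM, Matrix.mul_apply, Fin.sum_univ_three, hL12]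
    ring
  have hT21 : (Λ₁ * M) 2 1 = Λ₁ 2 1 / c - Λ₁ 2 2 * e / (c * f) := by
    simp [hM, Matrix.mul_apply, Fin.sum_univ_three]
    ring
  have habs : ∀ x : ℝ, x ≠ 0 → (0:ℝ) < |x| := fun x hx => abs_pos.mpr hx
  have haa := habs a ha0
  have hcc := habs c hc0
  have hff := habs f hf0
  constructor
  · rw [hT10, hT00, hT11]
    have key : |Λ₁ 1 0 / a - Λ₁ 1 1 * b / (a * c)| ≤ |Λ₁ 1 0| / |a| + |Λ₁ 1 1| * |b| / (|a| * |c|) := by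
      calc |Λ₁ 1 0 / a - Λ₁ 1 1 * b / (a * c)| ≤ |Λ₁ 1 0 / a| + |Λ₁ 1 1 * b / (a * c)| :=
            abs_sub _ _
        _ = |Λ₁ 1 0| / |a| + |Λ₁ 1 1| * |b| / (|a| * |c|) := by rw [abs_div, abs_div, abs_mul, abs_mul]
    refine key.trans ?_
    rw [abs_div, abs_div, mul_add]
    have h1 : |Λ₁ 1 0| ≤ α * |Λ₁ 0 0| := hbd₁ 1 0 (by decide) 0
    have h2 : |b| ≤ α * |a| := hbd₂ 1 0 (by decide) 0
    have t1 : |Λ₁ 1 0| / |a| ≤ α * (|Λ₁ 0 0| / |a|) := by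
      rw [← mul_div_assoc]; exact div_le_div_of_nonneg_right h1 haa.le
    have t2 : |Λ₁ 1 1| * |b| / (|a| * |c|) ≤ α * (|Λ₁ 1 1| / |c|) := by
      have hb' : |b| / |a| ≤ α := (div_le_iff₀ haa).mpr (by linarith)
      have heq : |Λ₁ 1 1| * |b| / (|a| * |c|) = (|b| / |a|) * (|Λ₁ 1 1| / |c|) := by
        field_simp
      rw [heq]
      exact mul_le_mul_of_nonneg_right hb' (by positivity)
    linarith
  · rw [hT21, hT11, hT22]
    have key : |Λ₁ 2 1 / c - Λ₁ 2 2 * e / (c * f)| ≤ |Λ₁ 2 1| / |c| + |Λ₁ 2 2| * |e| / (|c| * |f|) := by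
      calc |Λ₁ 2 1 / c - Λ₁ 2 2 * e / (c * f)| ≤ |Λ₁ 2 1 / c| + |Λ₁ 2 2 * e / (c * f)| :=
            abs_sub _ _
        _ = |Λ₁ 2 1| / |c| + |Λ₁ 2 2| * |e| / (|c| * |f|) := by rw [abs_div, abs_div, abs_mul, abs_mul]
    refine key.trans ?_
    rw [abs_div, abs_div, mul_add]
    have h1 : |Λ₁ 2 1| ≤ α * |Λ₁ 1 1| := hbd₁ 2 1 (by decide) 1
    have h2 : |e| ≤ α * |c| := hbd₂ 2 1 (by decide) 1
    have t1 : |Λ₁ 2 1| / |c| ≤ α * (|Λ₁ 1 1| / |c|) := by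
      rw [← mul_div_assoc]; exact div_le_div_of_nonneg_right h1 hcc.le
    have t2 : |Λ₁ 2 2| * |e| / (|c| * |f|) ≤ α * (|Λ₁ 2 2| / |f|) := by
      have hb' : |e| / |c| ≤ α := (div_le_iff₀ hcc).mpr (by linarith)
      have heq : |Λ₁ 2 2| * |e| / (|c| * |f|) = (|e| / |c|) * (|Λ₁ 2 2| / |f|) := by
        field_simp
      rw [heq]
      exact mul_le_mul_of_nonneg_right hb' (by positivity)
    linarith
end

section
/- Let α > 0 and let Λ₁, Λ₂ be real 3×3 lower-triangular matrices with nonzero diagonal entries such that, for each k ∈ {1,2}, every strictly-below-diagonal entry of Λ_k satisfies |(Λ_k)_{jl}| ≤ α·|(Λ_k)ᵢᵢ| for all i ∈ {1,2,3}. Then the matrix T = Λ₁Λ₂⁻¹ satisfies |T₃₁| ≤ α·(|T₁₁| + |T₃₃| + α·(|T₂₂| + |T₃₃|)). -/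
/-- Scalar core of the estimate. -/
lemma stmt6_aux (α a c b d e p r s t T00 T11 T20 T21 T22 : ℝ)
    (hα : 0 ≤ α) (ha : a ≠ 0) (hc : c ≠ 0)
    (e00 : T00 * a = p) (e11 : T11 * c = r)
    (e21 : T21 * c + T22 * e = t) (e20 : T20 * a + T21 * b + T22 * d = s)
    (hb : |b| ≤ α * |a|) (hd : |d| ≤ α * |a|) (he : |e| ≤ α * |c|)
    (hs : |s| ≤ α * |p|) (ht : |t| ≤ α * |r|) :
    |T20| ≤ α * (|T00| + |T22| + α * (|T11| + |T22|)) := by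
  have hac : (0:ℝ) < |a| := abs_pos.mpr ha
  have hcc : (0:ℝ) < |c| := abs_pos.mpr hc
  have hr : |T11| * |c| = |r| := by rw [← abs_mul, e11]
  have hp : |T00| * |a| = |p| := by rw [← abs_mul, e00]
  have h21 : |T21| ≤ α * (|T11| + |T22|) := by
    have key : |T21| * |c| ≤ (α * (|T11| + |T22|)) * |c| := by
      have h1 : T21 * c = t - T22 * e := by linarith
      have h2 : |T21 * c| ≤ |t| + |T22 * e| := h1 ▸ abs_sub t (T22 * e)
      rw [abs_mul, abs_mul] at h2
      have h3 : |T22| * |e| ≤ |T22| * (α * |c|) :=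
        mul_le_mul_of_nonneg_left he (abs_nonneg T22)
      have ht' : |t| ≤ α * (|T11| * |c|) := by rw [hr]; exact ht
      linarith
    exact le_of_mul_le_mul_right key hcc
  have key : |T20| * |a| ≤ (α * (|T00| + |T22| + α * (|T11| + |T22|))) * |a| := by
    have h1 : T20 * a = s - T21 * b - T22 * d := by linarith
    have h2 : |T20 * a| ≤ |s| + |T21 * b| + |T22 * d| := by
      calc |T20 * a| = |s - T21 * b - T22 * d| := by rw [h1]
        _ ≤ |s - T21 * b| + |T22 * d| := abs_sub _ _
        _ ≤ |s| + |T21 * b| + |T22 * d| := by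
            have := abs_sub s (T21 * b); linarith
    rw [abs_mul, abs_mul, abs_mul] at h2
    have h3 : |T21| * |b| ≤ |T21| * (α * |a|) :=
      mul_le_mul_of_nonneg_left hb (abs_nonneg T21)
    have h4 : |T22| * |d| ≤ |T22| * (α * |a|) :=
      mul_le_mul_of_nonneg_left hd (abs_nonneg T22)
    have h5 : |T21| * (α * |a|) ≤ (α * (|T11| + |T22|)) * (α * |a|) :=
      mul_le_mul_of_nonneg_right h21 (by positivity)
    have hs' : |s| ≤ α * (|T00| * |a|) := by rw [hp]; exact hs
    linarith
  exact le_of_mul_le_mul_right key hac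

/-- Under the hypotheses of Proposition 3.2 on the strictly-below-diagonal
entries of the lower-triangular matrices `Λ₁, Λ₂`, the corner entry of `T = Λ₁ Λ₂⁻¹`
satisfies `|T₃₁| ≤ α (|T₁₁| + |T₃₃| + α (|T₂₂| + |T₃₃|))`. -/
theorem stmt_6 (α : ℝ) (hα : 0 < α) (Λ₁ Λ₂ : Matrix (Fin 3) (Fin 3) ℝ)
    (hlow₁ : ∀ i j : Fin 3, i < j → Λ₁ i j = 0)
    (hlow₂ : ∀ i j : Fin 3, i < j → Λ₂ i j = 0)
    (hdiag₁ : ∀ i : Fin 3, Λ₁ i i ≠ 0)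
    (hdiag₂ : ∀ i : Fin 3, Λ₂ i i ≠ 0)
    (hbd₁ : ∀ j l : Fin 3, l < j → ∀ i : Fin 3, |Λ₁ j l| ≤ α * |Λ₁ i i|)
    (hbd₂ : ∀ j l : Fin 3, l < j → ∀ i : Fin 3, |Λ₂ j l| ≤ α * |Λ₂ i i|) :
    |(Λ₁ * Λ₂⁻¹) 2 0| ≤
      α * (|(Λ₁ * Λ₂⁻¹) 0 0| + |(Λ₁ * Λ₂⁻¹) 2 2| +
        α * (|(Λ₁ * Λ₂⁻¹) 1 1| + |(Λ₁ * Λ₂⁻¹) 2 2|)) := by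
  have h01 : ((0:Fin 3) < 1) := by decide
  have h02 : ((0:Fin 3) < 2) := by decide
  have h12 : ((1:Fin 3) < 2) := by decide
  have hdet : Λ₂.det = Λ₂ 0 0 * (Λ₂ 1 1 * Λ₂ 2 2) := by
    rw [Matrix.det_fin_three]
    rw [hlow₂ 0 1 h01, hlow₂ 0 2 h02, hlow₂ 1 2 h12]
    ring
  have hdet' : IsUnit Λ₂.det := by
    rw [hdet]
    exact isUnit_iff_ne_zero.mpr
      (mul_ne_zero (hdiag₂ 0) (mul_ne_zero (hdiag₂ 1) (hdiag₂ 2)))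
  have hT : (Λ₁ * Λ₂⁻¹) * Λ₂ = Λ₁ := by
    rw [Matrix.mul_assoc, Matrix.nonsing_inv_mul Λ₂ hdet', Matrix.mul_one]
  set T := Λ₁ * Λ₂⁻¹ with hTdef
  have E : ∀ i j : Fin 3,
      T i 0 * Λ₂ 0 j + T i 1 * Λ₂ 1 j + T i 2 * Λ₂ 2 j = Λ₁ i j := by
    intro i j
    have := congrFun (congrFun hT i) j
    simpa [Matrix.mul_apply, Fin.sum_univ_three] using this
  -- upper entries of T vanish
  have hT02 : T 0 2 = 0 := by
    have := E 0 2
    rw [hlow₂ 0 2 h02, hlow₂ 1 2 h12, hlow₁ 0 2 h02] at this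
    have h := mul_eq_zero.mp (by linarith : T 0 2 * Λ₂ 2 2 = 0)
    exact h.resolve_right (hdiag₂ 2)
  have hT12 : T 1 2 = 0 := by
    have := E 1 2
    rw [hlow₂ 0 2 h02, hlow₂ 1 2 h12, hlow₁ 1 2 h12] at this
    have h := mul_eq_zero.mp (by linarith : T 1 2 * Λ₂ 2 2 = 0)
    exact h.resolve_right (hdiag₂ 2)
  have hT01 : T 0 1 = 0 := by
    have := E 0 1
    rw [hlow₂ 0 1 h01, hlow₁ 0 1 h01, hT02] at this
    have h := mul_eq_zero.mp (by linarith : T 0 1 * Λ₂ 1 1 = 0)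
    exact h.resolve_right (hdiag₂ 1)
  -- scalar equations
  have e00 : T 0 0 * Λ₂ 0 0 = Λ₁ 0 0 := by
    have := E 0 0; rw [hT01, hT02] at this; linarith
  have e11 : T 1 1 * Λ₂ 1 1 = Λ₁ 1 1 := by
    have := E 1 1; rw [hlow₂ 0 1 h01, hT12] at this; linarith
  have e21 : T 2 1 * Λ₂ 1 1 + T 2 2 * Λ₂ 2 1 = Λ₁ 2 1 := by
    have := E 2 1; rw [hlow₂ 0 1 h01] at this; linarith
  have e20 : T 2 0 * Λ₂ 0 0 + T 2 1 * Λ₂ 1 0 + T 2 2 * Λ₂ 2 0 = Λ₁ 2 0 :=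
    E 2 0
  exact stmt6_aux α (Λ₂ 0 0) (Λ₂ 1 1) (Λ₂ 1 0) (Λ₂ 2 0) (Λ₂ 2 1)
    (Λ₁ 0 0) (Λ₁ 1 1) (Λ₁ 2 0) (Λ₁ 2 1)
    (T 0 0) (T 1 1) (T 2 0) (T 2 1) (T 2 2)
    hα.le (hdiag₂ 0) (hdiag₂ 1) e00 e11 e21 e20
    (hbd₂ 1 0 h01 0) (hbd₂ 2 0 h02 0) (hbd₂ 2 1 h12 1)
    (hbd₁ 2 0 h02 0) (hbd₁ 2 1 h12 1)
end

section
/- Let α ≥ 0 and let a₁, a₂, a₃, a₄, a₅, a₆ be real numbers satisfying |a₂| ≤ α(|a₁| + |a₄|), |a₅| ≤ α(|a₄| + |a₆|), and |a₃| ≤ α(|a₁| + |a₆| + α(|a₄| + |a₆|)). Then a₄² + a₅² + |a₂a₄ + a₃a₅| + |a₅a₆| ≤ (1 + α + α² + α³)·a₄² + (α + α²)·|a₁a₄| + α²·|a₁a₆| + (α + 3α² + 2α³)·|a₄a₆| + α(1 + α)²·a₆². -/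
/-- row sum II in the proof of Proposition 3.2. -/
theorem stmt_8 (α a₁ a₂ a₃ a₄ a₅ a₆ : ℝ) (hα : 0 ≤ α)
    (h2 : |a₂| ≤ α * (|a₁| + |a₄|))
    (h5 : |a₅| ≤ α * (|a₄| + |a₆|))
    (h3 : |a₃| ≤ α * (|a₁| + |a₆| + α * (|a₄| + |a₆|))) :
    a₄^2 + a₅^2 + |a₂*a₄ + a₃*a₅| + |a₅*a₆| ≤
      (1 + α + α^2 + α^3) * a₄^2 + (α + α^2) * |a₁*a₄| + α^2 * |a₁*a₆| +
      (α + 3*α^2 + 2*α^3) * |a₄*a₆| + α * (1 + α)^2 * a₆^2 := by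
  have m24 : |a₂*a₄ + a₃*a₅| ≤ |a₂| * |a₄| + |a₃| * |a₅| :=
    (abs_add_le _ _).trans (by rw [abs_mul, abs_mul])
  rw [abs_mul a₅ a₆, abs_mul a₁ a₄, abs_mul a₁ a₆, abs_mul a₄ a₆]
  have hb2 : |a₂| * |a₄| ≤ (α * (|a₁| + |a₄|)) * |a₄| :=
    mul_le_mul_of_nonneg_right h2 (abs_nonneg a₄)
  have hb3 : |a₃| * |a₅| ≤ (α * (|a₁| + |a₆| + α * (|a₄| + |a₆|))) * (α * (|a₄| + |a₆|)) :=
    mul_le_mul h3 h5 (abs_nonneg a₅) (by positivity)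
  have hb5 : |a₅| * |a₆| ≤ (α * (|a₄| + |a₆|)) * |a₆| :=
    mul_le_mul_of_nonneg_right h5 (abs_nonneg a₆)
  have hb55 : a₅^2 ≤ (α * (|a₄| + |a₆|))^2 := by
    rw [← sq_abs a₅]
    exact pow_le_pow_left₀ (abs_nonneg a₅) h5 2
  rw [← sq_abs a₄, ← sq_abs a₆, ← sq_abs a₅] at *
  nlinarith [m24, hb2, hb3, hb5, hb55]
end

section
/- For all real numbers τ₁, τ₂ with 0.5 < τ₁ < τ₂ ≤ 1, the diagonal real 2×2 matrix T = diag(τ₁/τ₂, √((2τ₁ − τ₁²)/(2τ₂ − τ₂²))) satisfies ‖T‖ < 1 in the Euclidean operator norm, i.e. T is a strict contraction. -/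
/-- For `0.5 < τ₁ < τ₂ ≤ 1`, the diagonal matrix
`T = diag(τ₁/τ₂, √((2τ₁ − τ₁²)/(2τ₂ − τ₂²)))` is a strict contraction in the Euclidean
operator norm; hence the honeycomb deformation path is auxetic on `(0.5, 1]`. -/
theorem stmt_12 (τ₁ τ₂ : ℝ) (h05 : 0.5 < τ₁) (h12 : τ₁ < τ₂) (h21 : τ₂ ≤ 1) :
    ‖Matrix.toEuclideanCLM (𝕜 := ℝ)
      (Matrix.diagonal ![τ₁ / τ₂, Real.sqrt ((2*τ₁ - τ₁^2) / (2*τ₂ - τ₂^2))])‖ < 1 := by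
  set a : ℝ := τ₁ / τ₂ with ha
  set b : ℝ := Real.sqrt ((2*τ₁ - τ₁^2) / (2*τ₂ - τ₂^2)) with hb
  have hτ₂ : 0 < τ₂ := by linarith
  have ha0 : 0 ≤ a := by positivity
  have ha1 : a < 1 := (div_lt_one hτ₂).mpr h12
  have hden : 0 < 2*τ₂ - τ₂^2 := by nlinarith
  have hnum0 : 0 < 2*τ₁ - τ₁^2 := by nlinarith
  have hnum : 2*τ₁ - τ₁^2 < 2*τ₂ - τ₂^2 := by nlinarith
  have hb0 : 0 ≤ b := Real.sqrt_nonneg _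
  have hb1 : b < 1 := by
    rw [hb, show (1:ℝ) = Real.sqrt 1 from Real.sqrt_one.symm]
    exact Real.sqrt_lt_sqrt (by positivity) ((div_lt_one hden).mpr hnum)
  set c : ℝ := max a b with hc
  have hc1 : c < 1 := max_lt ha1 hb1
  have hc0 : 0 ≤ c := le_trans ha0 (le_max_left _ _)
  have hac : a ≤ c := le_max_left _ _
  have hbc : b ≤ c := le_max_right _ _
  refine lt_of_le_of_lt (ContinuousLinearMap.opNorm_le_bound _ hc0 ?_) hc1
  intro x
  have hx : ∀ i, ((Matrix.toEuclideanCLM (𝕜 := ℝ) (Matrix.diagonal ![a, b])) x) i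
      = (![a, b] i) * x i := by
    intro i
    have h := Matrix.ofLp_toEuclideanCLM (Matrix.diagonal ![a, b]) x
    have h2 := congrFun h i
    simpa [Matrix.mulVec_diagonal] using h2
  rw [EuclideanSpace.norm_eq, EuclideanSpace.norm_eq]
  rw [show c * Real.sqrt (∑ i, ‖x i‖ ^ 2) = Real.sqrt (c^2 * ∑ i, ‖x i‖ ^ 2) by
    rw [Real.sqrt_mul (by positivity), Real.sqrt_sq hc0]]
  apply Real.sqrt_le_sqrt
  rw [Fin.sum_univ_two, Fin.sum_univ_two, hx 0, hx 1]
  simp only [Matrix.cons_val_zero, Matrix.cons_val_one, Matrix.head_cons, Real.norm_eq_abs,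
    sq_abs]
  nlinarith [sq_nonneg (x 0), sq_nonneg (x 1), mul_le_mul_of_nonneg_right (mul_le_mul hac hac ha0 hc0) (sq_nonneg (x 0)), mul_le_mul_of_nonneg_right (mul_le_mul hbc hbc hb0 hc0) (sq_nonneg (x 1))]
end

section
/- For all real numbers τ₁, τ₂ with 1 ≤ τ₁ < τ₂ < 1.5, the diagonal real 2×2 matrix T = diag(τ₁/τ₂, √((2τ₁ − τ₁²)/(2τ₂ − τ₂²))) satisfies ‖T‖ > 1 in the Euclidean operator norm. -/
/-!
The L2 operator norm of a diagonal matrix is the largest modulus of its entries, and the second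
entry exceeds `1` because `t ↦ 2t - t²` is strictly decreasing on `[1, ∞)` and positive below `2`.
-/

open scoped Matrix.Norms.L2Operator

lemma two_mul_sub_sq_strictAntiOn : StrictAntiOn (fun t : ℝ ↦ 2 * t - t ^ 2) (Set.Ici 1) := by
  intro a ha b _ hab
  simp only [Set.mem_Ici] at ha
  nlinarith

lemma norm_le_l2_opNorm_diagonal {𝕜 n : Type*} [RCLike 𝕜] [Fintype n] [DecidableEq n]
    (v : n → 𝕜) (i : n) : ‖v i‖ ≤ ‖Matrix.toEuclideanCLM (𝕜 := 𝕜) (Matrix.diagonal v)‖ := by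
  rw [Matrix.l2_opNorm_toEuclideanCLM, Matrix.l2_opNorm_diagonal]
  exact norm_le_pi_norm v i

/-- For `1 ≤ τ₁ < τ₂ < 1.5`, the diagonal matrix
`T = diag(τ₁/τ₂, √((2τ₁ − τ₁²)/(2τ₂ − τ₂²)))` has Euclidean operator norm greater than `1`;
hence the honeycomb deformation path is not auxetic on `(1, 1.5)`. -/
theorem stmt_13 (τ₁ τ₂ : ℝ) (h11 : 1 ≤ τ₁) (h12 : τ₁ < τ₂) (h215 : τ₂ < 1.5) :
    1 < ‖Matrix.toEuclideanCLM (𝕜 := ℝ)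
      (Matrix.diagonal ![τ₁ / τ₂, Real.sqrt ((2*τ₁ - τ₁^2) / (2*τ₂ - τ₂^2))])‖ := by
  have hden : 0 < 2 * τ₂ - τ₂ ^ 2 := by nlinarith
  have hlt : 2 * τ₂ - τ₂ ^ 2 < 2 * τ₁ - τ₁ ^ 2 :=
    two_mul_sub_sq_strictAntiOn (Set.mem_Ici.2 h11) (Set.mem_Ici.2 (h11.trans h12.le)) h12
  have hsqrt : 1 < Real.sqrt ((2 * τ₁ - τ₁ ^ 2) / (2 * τ₂ - τ₂ ^ 2)) :=
    Real.lt_sqrt_of_sq_lt (by rw [one_pow, one_lt_div hden]; exact hlt)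
  calc 1 < ‖Real.sqrt ((2 * τ₁ - τ₁ ^ 2) / (2 * τ₂ - τ₂ ^ 2))‖ := by
        rwa [Real.norm_of_nonneg (Real.sqrt_nonneg _)]
    _ ≤ _ := norm_le_l2_opNorm_diagonal ![τ₁ / τ₂, _] 1
end
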